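/- arXiv:2108.08744 — 5 statements merged into one kernel-verified Lean document; each statement's English description precedes it below -/
import Mathlib

section
/- Let p ∈ ℂ³ be a nonzero isotropic vector and let v₁, …, v_k, v_{k+1} = v₁ ∈ ℂ³ be points forming a cycle, all lying in a common affine plane {v : b(v, p) = c} for some constant c ∈ ℂ. Suppose λ₁, …, λ_k are real numbers with q(v_j − v_{j+1}) = λ_j² for each j. Then there exist signs η_j ∈ {−1, 1} such that Σ_{j=1}^{k} η_j λ_j = 0. -/
private lemma sq_key (P0 P1 P2 w0 w1 w2 : ℂ) (l : ℝ)
    (hiso : P0^2 + P1^2 + P2^2 = 0) (hb : P0*w0 + P1*w1 + P2*w2 = 0)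
    (hlen : w0^2 + w1^2 + w2^2 = (l:ℂ)^2) :
    (P1*w0 - P0*w1)^2 = ((l:ℂ) * (Complex.I * P2))^2 := by
  have hI : Complex.I ^ 2 = -1 := Complex.I_sq
  linear_combination (w0^2+w1^2)*hiso + (2*P2*w2 - (P0*w0+P1*w1+P2*w2))*hb
    - P2^2*hlen + (-(l:ℂ)^2*P2^2)*hI

private lemma helper (k : ℕ) [NeZero k] (lam : Fin k → ℝ) (m : ℂ) (hm : m ≠ 0)
    (f : Fin k → ℂ) (hsum : ∑ j, f j = 0)
    (hsq : ∀ j, f j ^ 2 = ((lam j : ℂ) * m) ^ 2) :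
    ∃ η : Fin k → ℝ, (∀ j, η j = 1 ∨ η j = -1) ∧ ∑ j : Fin k, η j * lam j = 0 := by
  refine ⟨fun j => if f j = (lam j : ℂ) * m then 1 else -1,
    fun j => by dsimp only; split <;> simp, ?_⟩
  have key : ∀ j, (((if f j = (lam j : ℂ) * m then (1:ℝ) else -1) * lam j : ℝ) : ℂ) * m = f j := by
    intro j
    by_cases h : f j = (lam j : ℂ) * m
    · rw [if_pos h]; push_cast; linear_combination -h
    · rw [if_neg h]
      have h0 : (f j - (lam j : ℂ) * m) * (f j + (lam j : ℂ) * m) = 0 := by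
        linear_combination hsq j
      rcases mul_eq_zero.1 h0 with h1 | h1
      · exact (h (sub_eq_zero.1 h1)).elim
      · push_cast
        linear_combination -h1
  have h2 : ((∑ j : Fin k, (if f j = (lam j : ℂ) * m then (1:ℝ) else -1) * lam j : ℝ) : ℂ) * m = 0 := by
    push_cast
    rw [Finset.sum_mul, ← hsum]
    refine Finset.sum_congr rfl fun j _ => ?_
    have := key j
    push_cast at this
    exact this
  have h3 := (mul_eq_zero.1 h2).resolve_right hm
  exact_mod_cast h3

/-- zero-sum property for cycles of points in a common affine plane whose
normal vector `p` is a nonzero isotropic vector of the standard complex bilinear form. -/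
theorem zero_sum_cycle_in_isotropic_plane
    (k : ℕ) [NeZero k]
    (p : Fin 3 → ℂ) (hp : p ≠ 0)
    (hiso : p 0 ^ 2 + p 1 ^ 2 + p 2 ^ 2 = 0)
    (v : Fin k → (Fin 3 → ℂ)) (c : ℂ)
    (hplane : ∀ j : Fin k, (v j) 0 * p 0 + (v j) 1 * p 1 + (v j) 2 * p 2 = c)
    (lam : Fin k → ℝ)
    (hlen : ∀ j : Fin k,
      ((v j) 0 - (v (j + 1)) 0) ^ 2 + ((v j) 1 - (v (j + 1)) 1) ^ 2 +
        ((v j) 2 - (v (j + 1)) 2) ^ 2 = ((lam j : ℂ)) ^ 2) :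
    ∃ η : Fin k → ℝ, (∀ j, η j = 1 ∨ η j = -1) ∧ ∑ j : Fin k, η j * lam j = 0 := by
  -- orthogonality of edges
  have hb : ∀ j : Fin k,
      p 0 * (v j 0 - v (j+1) 0) + p 1 * (v j 1 - v (j+1) 1) + p 2 * (v j 2 - v (j+1) 2) = 0 := by
    intro j
    linear_combination hplane j - hplane (j+1)
  -- telescoping sums
  have hshift : ∀ i : Fin 3, ∑ j : Fin k, v (j+1) i = ∑ j : Fin k, v j i := by
    intro i
    exact Fintype.sum_equiv (Equiv.addRight 1) _ _ (fun j => rfl)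
  have hsum0 : ∀ a b : ℂ, ∀ i0 i1 : Fin 3,
      ∑ j : Fin k, (a * (v j i0 - v (j+1) i0) - b * (v j i1 - v (j+1) i1)) = 0 := by
    intro a b i0 i1
    have : ∀ j : Fin k, a * (v j i0 - v (j+1) i0) - b * (v j i1 - v (j+1) i1)
        = (a * v j i0 - b * v j i1) - (a * v (j+1) i0 - b * v (j+1) i1) := by intro j; ring
    rw [Finset.sum_congr rfl (fun j _ => this j), Finset.sum_sub_distrib]
    have e : ∑ j : Fin k, (a * v (j+1) i0 - b * v (j+1) i1)
        = ∑ j : Fin k, (a * v j i0 - b * v j i1) :=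
      Fintype.sum_equiv (Equiv.addRight 1) _ _ (fun j => rfl)
    rw [e, sub_self]
  -- some component of p is nonzero
  have hne : p 0 ≠ 0 ∨ p 1 ≠ 0 ∨ p 2 ≠ 0 := by
    by_contra h
    push_neg at h
    obtain ⟨h0, h1, h2⟩ := h
    apply hp
    funext i
    fin_cases i <;> assumption
  rcases hne with h | h | h
  · -- p 0 ≠ 0 : use f j = p2*w1 - p1*w2
    refine helper k lam (Complex.I * p 0) (mul_ne_zero Complex.I_ne_zero h)
      (fun j => p 2 * (v j 1 - v (j+1) 1) - p 1 * (v j 2 - v (j+1) 2))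
      (hsum0 _ _ _ _) (fun j => ?_)
    exact sq_key (p 1) (p 2) (p 0) (v j 1 - v (j+1) 1) (v j 2 - v (j+1) 2) (v j 0 - v (j+1) 0)
      (lam j) (by linear_combination hiso) (by linear_combination hb j) (by linear_combination hlen j)
  · refine helper k lam (Complex.I * p 1) (mul_ne_zero Complex.I_ne_zero h)
      (fun j => p 0 * (v j 2 - v (j+1) 2) - p 2 * (v j 0 - v (j+1) 0))
      (hsum0 _ _ _ _) (fun j => ?_)
    exact sq_key (p 2) (p 0) (p 1) (v j 2 - v (j+1) 2) (v j 0 - v (j+1) 0) (v j 1 - v (j+1) 1)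
      (lam j) (by linear_combination hiso) (by linear_combination hb j) (by linear_combination hlen j)
  · refine helper k lam (Complex.I * p 2) (mul_ne_zero Complex.I_ne_zero h)
      (fun j => p 1 * (v j 0 - v (j+1) 0) - p 0 * (v j 1 - v (j+1) 1))
      (hsum0 _ _ _ _) (fun j => ?_)
    exact sq_key (p 0) (p 1) (p 2) (v j 0 - v (j+1) 0) (v j 1 - v (j+1) 1) (v j 2 - v (j+1) 2)
      (lam j) hiso (hb j) (hlen j)
end

section
/- Let p ∈ ℂ³ be a nonzero isotropic vector and let a, b, c ∈ ℂ³ be three points lying in a common affine plane {v : b(v,p) = κ}. Suppose q(a−b) = λ₁², q(b−c) = λ₂², q(a−c) = λ₃² with λ₁, λ₂, λ₃ real and strictly positive. Then λ₃ = λ₁ + λ₂ or λ₃ = |λ₁ − λ₂|; in particular three points of ℝ³ with these pairwise Euclidean distances are collinear. -/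
/-- three points in an affine plane with isotropic normal vector behave
like collinear points: one of the mutual "distances" is the sum of the other two. -/
theorem three_points_isotropic_plane_degenerate_triangle
    (p : Fin 3 → ℂ) (hp : p ≠ 0)
    (hiso : p 0 ^ 2 + p 1 ^ 2 + p 2 ^ 2 = 0)
    (a b c : Fin 3 → ℂ) (κ : ℂ)
    (ha : a 0 * p 0 + a 1 * p 1 + a 2 * p 2 = κ)
    (hb : b 0 * p 0 + b 1 * p 1 + b 2 * p 2 = κ)
    (hc : c 0 * p 0 + c 1 * p 1 + c 2 * p 2 = κ)
    (lam₁ lam₂ lam₃ : ℝ)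
    (hlam₁ : 0 < lam₁) (hlam₂ : 0 < lam₂) (hlam₃ : 0 < lam₃)
    (h₁ : (a 0 - b 0) ^ 2 + (a 1 - b 1) ^ 2 + (a 2 - b 2) ^ 2 = ((lam₁ : ℂ)) ^ 2)
    (h₂ : (b 0 - c 0) ^ 2 + (b 1 - c 1) ^ 2 + (b 2 - c 2) ^ 2 = ((lam₂ : ℂ)) ^ 2)
    (h₃ : (a 0 - c 0) ^ 2 + (a 1 - c 1) ^ 2 + (a 2 - c 2) ^ 2 = ((lam₃ : ℂ)) ^ 2) :
    lam₃ = lam₁ + lam₂ ∨ lam₃ = |lam₁ - lam₂| := by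
  -- u = a - b, w = b - c
  have hup : (a 0 - b 0) * p 0 + (a 1 - b 1) * p 1 + (a 2 - b 2) * p 2 = 0 := by
    linear_combination ha - hb
  have hwp : (b 0 - c 0) * p 0 + (b 1 - c 1) * p 1 + (b 2 - c 2) * p 2 = 0 := by
    linear_combination hb - hc
  set u0 := a 0 - b 0 with hu0
  set u1 := a 1 - b 1 with hu1
  set u2 := a 2 - b 2 with hu2
  set w0 := b 0 - c 0 with hw0
  set w1 := b 1 - c 1 with hw1
  set w2 := b 2 - c 2 with hw2
  set x0 := u1 * w2 - u2 * w1 with hx0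
  set x1 := u2 * w0 - u0 * w2 with hx1
  set x2 := u0 * w1 - u1 * w0 with hx2
  -- cross product of x with p vanishes
  have h12 : x1 * p 2 - x2 * p 1 = 0 := by
    simp only [hx1, hx2]; linear_combination w0 * hup - u0 * hwp
  have h20 : x2 * p 0 - x0 * p 2 = 0 := by
    simp only [hx2, hx0]; linear_combination w1 * hup - u1 * hwp
  have h01 : x0 * p 1 - x1 * p 0 = 0 := by
    simp only [hx0, hx1]; linear_combination w2 * hup - u2 * hwp
  -- hence x is isotropic
  obtain ⟨k, hk⟩ := Function.ne_iff.mp hp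
  simp only [Pi.zero_apply] at hk
  have hxx : x0 ^ 2 + x1 ^ 2 + x2 ^ 2 = 0 := by
    fin_cases k
    · have h : (x0 ^ 2 + x1 ^ 2 + x2 ^ 2) * p 0 ^ 2 = 0 := by
        linear_combination x0 ^ 2 * hiso - (x1 * p 0 + x0 * p 1) * h01 +
          (x2 * p 0 + x0 * p 2) * h20
      rcases mul_eq_zero.mp h with h' | h'
      · exact h'
      · exact absurd (pow_eq_zero_iff (by norm_num) |>.mp h') hk
    · have h : (x0 ^ 2 + x1 ^ 2 + x2 ^ 2) * p 1 ^ 2 = 0 := by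
        linear_combination x1 ^ 2 * hiso + (x0 * p 1 + x1 * p 0) * h01 -
          (x2 * p 1 + x1 * p 2) * h12
      rcases mul_eq_zero.mp h with h' | h'
      · exact h'
      · exact absurd (pow_eq_zero_iff (by norm_num) |>.mp h') hk
    · have h : (x0 ^ 2 + x1 ^ 2 + x2 ^ 2) * p 2 ^ 2 = 0 := by
        linear_combination x2 ^ 2 * hiso + (x1 * p 2 + x2 * p 1) * h12 -
          (x0 * p 2 + x2 * p 0) * h20
      rcases mul_eq_zero.mp h with h' | h'
      · exact h'
      · exact absurd (pow_eq_zero_iff (by norm_num) |>.mp h') hk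
  -- Lagrange identity: (u·w)² = q(u) q(w) - q(u×w)
  have key : (u0 * w0 + u1 * w1 + u2 * w2) ^ 2 = ((lam₁ : ℂ) * lam₂) ^ 2 := by
    linear_combination (w0 ^ 2 + w1 ^ 2 + w2 ^ 2) * h₁ + (lam₁ : ℂ) ^ 2 * h₂ - hxx
  have hfac : ((u0 * w0 + u1 * w1 + u2 * w2) - (lam₁ : ℂ) * lam₂) *
      ((u0 * w0 + u1 * w1 + u2 * w2) + (lam₁ : ℂ) * lam₂) = 0 := by
    linear_combination key
  rcases mul_eq_zero.mp hfac with hd | hd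
  · -- u·w = λ₁ λ₂, so λ₃² = (λ₁+λ₂)²
    left
    have hsum : ((lam₃ : ℂ)) ^ 2 = ((lam₁ : ℂ) + lam₂) ^ 2 := by
      linear_combination h₁ + h₂ + 2 * hd - h₃
    have hR : lam₃ ^ 2 = (lam₁ + lam₂) ^ 2 := by exact_mod_cast hsum
    nlinarith [hR, hlam₁, hlam₂, hlam₃]
  · -- u·w = -λ₁ λ₂, so λ₃² = (λ₁-λ₂)²
    right
    have hsum : ((lam₃ : ℂ)) ^ 2 = ((lam₁ : ℂ) - lam₂) ^ 2 := by
      linear_combination h₁ + h₂ + 2 * hd - h₃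
    have hR : lam₃ ^ 2 = (lam₁ - lam₂) ^ 2 := by exact_mod_cast hsum
    have hfac2 : (lam₃ - |lam₁ - lam₂|) * (lam₃ + |lam₁ - lam₂|) = 0 := by
      linear_combination hR - sq_abs (lam₁ - lam₂)
    rcases mul_eq_zero.mp hfac2 with h' | h'
    · linarith [sub_eq_zero.mp h']
    · have := abs_nonneg (lam₁ - lam₂); linarith
end

section
/- Let ρ : [0,1) → (ℝ³)^V be a continuous family of maps (a flex) and let v₁, v₂, u₁, u₂ ∈ V. Suppose that for all t the distances ‖ρ(t)(a) − ρ(t)(b)‖ are constant in t for each pair {a,b} among {v₁,v₂}, {v₁,u₁}, {v₂,u₁}, {v₁,u₂}, {v₂,u₂}, that ρ(0)(v₁), ρ(0)(v₂), ρ(0)(u₁) are not collinear and ρ(0)(v₁), ρ(0)(v₂), ρ(0)(u₂) are not collinear, and that the dihedral angle between the planes spanned by the triangles (v₁,v₂,u₁) and (v₁,v₂,u₂) is constant along t. Then the distance ‖ρ(t)(u₁) − ρ(t)(u₂)‖ is constant in t. -/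
open scoped RealInnerProductSpace


local notation "E3" => EuclideanSpace ℝ (Fin 3)

lemma proj_formula (e w : E3) :
    ((Submodule.orthogonalProjectionOnto (ℝ ∙ e)ᗮ w : E3)) = w - (⟪e, w⟫ / ‖e‖ ^ 2) • e := by
  rw [← Submodule.starProjection_apply, Submodule.starProjection_orthogonal_val,
    Submodule.starProjection_singleton]
  norm_num

lemma inner_pr (e c d : E3) (he : e ≠ 0) :
    ⟪c - (⟪e, c⟫ / ‖e‖ ^ 2) • e, d - (⟪e, d⟫ / ‖e‖ ^ 2) • e⟫ =
      ⟪c, d⟫ - ⟪e, c⟫ * ⟪e, d⟫ / ‖e‖ ^ 2 := by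
  have hne : ‖e‖ ≠ 0 := norm_ne_zero_iff.mpr he
  simp only [inner_sub_left, inner_sub_right, real_inner_smul_left, real_inner_smul_right,
    real_inner_self_eq_norm_sq, real_inner_comm c e, real_inner_comm d e]
  field_simp
  ring

lemma sq_eq_nonneg {a b : ℝ} (ha : 0 ≤ a) (hb : 0 ≤ b) (h : a ^ 2 = b ^ 2) : a = b := by
  have := congrArg Real.sqrt h
  rwa [Real.sqrt_sq ha, Real.sqrt_sq hb] at this

lemma not_collinear_aux {A B C : E3} (h : ¬ Collinear ℝ ({A, B, C} : Set E3))
    (k : ℝ) (hk : C - A = k • (B - A)) : False := by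
  apply h
  rw [collinear_iff_of_mem (Set.mem_insert A _)]
  refine ⟨B - A, ?_⟩
  rintro p (rfl | rfl | rfl)
  · exact ⟨0, by simp⟩
  · exact ⟨1, by simp⟩
  · exact ⟨k, by rw [← hk]; simp⟩

lemma core (e c d e' c' d' : E3) (he' : e' ≠ 0)
    (h1 : ‖e‖ = ‖e'‖) (h2 : ‖c‖ = ‖c'‖) (h3 : ‖c - e‖ = ‖c' - e'‖)
    (h4 : ‖d‖ = ‖d'‖) (h5 : ‖d - e‖ = ‖d' - e'‖)
    (hc' : ∀ k : ℝ, c' ≠ k • e') (hd' : ∀ k : ℝ, d' ≠ k • e')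
    (hdih : InnerProductGeometry.angle (c - (⟪e, c⟫ / ‖e‖ ^ 2) • e)
        (d - (⟪e, d⟫ / ‖e‖ ^ 2) • e) =
      InnerProductGeometry.angle (c' - (⟪e', c'⟫ / ‖e'‖ ^ 2) • e')
        (d' - (⟪e', d'⟫ / ‖e'‖ ^ 2) • e')) :
    ‖c - d‖ = ‖c' - d'‖ := by
  have he : e ≠ 0 := by
    rw [← norm_ne_zero_iff] at he' ⊢; rwa [h1]
  have n1 : ‖e‖ ^ 2 = ‖e'‖ ^ 2 := by rw [h1]
  have n2 : ‖c‖ ^ 2 = ‖c'‖ ^ 2 := by rw [h2]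
  have n3 : ‖c - e‖ ^ 2 = ‖c' - e'‖ ^ 2 := by rw [h3]
  have n4 : ‖d‖ ^ 2 = ‖d'‖ ^ 2 := by rw [h4]
  have n5 : ‖d - e‖ ^ 2 = ‖d' - e'‖ ^ 2 := by rw [h5]
  have hec : ⟪e, c⟫ = ⟪e', c'⟫ := by
    have a1 := norm_sub_sq_real c e
    have a2 := norm_sub_sq_real c' e'
    rw [real_inner_comm c e, real_inner_comm c' e']
    linarith
  have hed : ⟪e, d⟫ = ⟪e', d'⟫ := by
    have a1 := norm_sub_sq_real d e
    have a2 := norm_sub_sq_real d' e'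
    rw [real_inner_comm d e, real_inner_comm d' e']
    linarith
  set p := c - (⟪e, c⟫ / ‖e‖ ^ 2) • e with hp
  set q := d - (⟪e, d⟫ / ‖e‖ ^ 2) • e with hq
  set p' := c' - (⟪e', c'⟫ / ‖e'‖ ^ 2) • e' with hp'
  set q' := d' - (⟪e', d'⟫ / ‖e'‖ ^ 2) • e' with hq'
  have hpn2 : ‖p‖ ^ 2 = ‖p'‖ ^ 2 := by
    rw [← real_inner_self_eq_norm_sq, ← real_inner_self_eq_norm_sq, hp, hp',
      inner_pr e c c he, inner_pr e' c' c' he', real_inner_self_eq_norm_sq,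
      real_inner_self_eq_norm_sq, n2, hec, n1]
  have hqn2 : ‖q‖ ^ 2 = ‖q'‖ ^ 2 := by
    rw [← real_inner_self_eq_norm_sq, ← real_inner_self_eq_norm_sq, hq, hq',
      inner_pr e d d he, inner_pr e' d' d' he', real_inner_self_eq_norm_sq,
      real_inner_self_eq_norm_sq, n4, hed, n1]
  have hpn : ‖p‖ = ‖p'‖ := sq_eq_nonneg (norm_nonneg _) (norm_nonneg _) hpn2
  have hqn : ‖q‖ = ‖q'‖ := sq_eq_nonneg (norm_nonneg _) (norm_nonneg _) hqn2
  have hp'ne : p' ≠ 0 := by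
    intro h0
    exact hc' (⟪e', c'⟫ / ‖e'‖ ^ 2) (sub_eq_zero.mp h0)
  have hq'ne : q' ≠ 0 := by
    intro h0
    exact hd' (⟪e', d'⟫ / ‖e'‖ ^ 2) (sub_eq_zero.mp h0)
  have hm : ‖p'‖ * ‖q'‖ ≠ 0 :=
    mul_ne_zero (norm_ne_zero_iff.mpr hp'ne) (norm_ne_zero_iff.mpr hq'ne)
  have hcos := congrArg Real.cos hdih
  rw [InnerProductGeometry.cos_angle, InnerProductGeometry.cos_angle, hpn, hqn,
    div_eq_div_iff hm hm] at hcos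
  have hipq : ⟪p, q⟫ = ⟪p', q'⟫ := mul_right_cancel₀ hm hcos
  rw [hp, hq, hp', hq', inner_pr e c d he, inner_pr e' c' d' he'] at hipq
  have hicd : ⟪c, d⟫ = ⟪c', d'⟫ := by
    rw [hec, hed, n1] at hipq
    linarith
  refine sq_eq_nonneg (norm_nonneg _) (norm_nonneg _) ?_
  rw [norm_sub_sq_real, norm_sub_sq_real, n2, n4, hicd]

/-- The (unsigned) dihedral angle at the edge `(a, b)` between the triangles
`(a, b, c)` and `(a, b, d)`: the angle between the orthogonal projections of
`c - a` and `d - a` onto the orthogonal complement of `b - a`. -/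
noncomputable def dihedralAngle (a b c d : EuclideanSpace ℝ (Fin 3)) : ℝ :=
  InnerProductGeometry.angle
    ((Submodule.orthogonalProjectionOnto (ℝ ∙ (b - a))ᗮ) (c - a))
    ((Submodule.orthogonalProjectionOnto (ℝ ∙ (b - a))ᗮ) (d - a))

lemma dihedralAngle_eq (a b c d : E3) :
    dihedralAngle a b c d = InnerProductGeometry.angle
      ((c - a) - (⟪b - a, c - a⟫ / ‖b - a‖ ^ 2) • (b - a))
      ((d - a) - (⟪b - a, d - a⟫ / ‖b - a‖ ^ 2) • (b - a)) := by
  rw [dihedralAngle, ← Submodule.angle_coe, proj_formula, proj_formula]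

/-- if the five distances among `v₁, v₂, u₁, u₂` other than `‖u₁ - u₂‖`
are constant along a flex, the two triangles are non-degenerate, and the dihedral
angle at `{v₁, v₂}` is constant along the flex, then `‖u₁ - u₂‖` is constant too. -/
theorem dist_constant_of_dihedral_constant {V : Type*} [Fintype V]
    (ρ : Set.Ico (0 : ℝ) 1 → V → EuclideanSpace ℝ (Fin 3))
    (hcont : Continuous ρ)
    (v₁ v₂ u₁ u₂ : V)
    (t₀ : Set.Ico (0 : ℝ) 1) (ht₀ : (t₀ : ℝ) = 0)
    (h₁ : ∀ t, dist (ρ t v₁) (ρ t v₂) = dist (ρ t₀ v₁) (ρ t₀ v₂))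
    (h₂ : ∀ t, dist (ρ t v₁) (ρ t u₁) = dist (ρ t₀ v₁) (ρ t₀ u₁))
    (h₃ : ∀ t, dist (ρ t v₂) (ρ t u₁) = dist (ρ t₀ v₂) (ρ t₀ u₁))
    (h₄ : ∀ t, dist (ρ t v₁) (ρ t u₂) = dist (ρ t₀ v₁) (ρ t₀ u₂))
    (h₅ : ∀ t, dist (ρ t v₂) (ρ t u₂) = dist (ρ t₀ v₂) (ρ t₀ u₂))
    (hnc₁ : ¬ Collinear ℝ {ρ t₀ v₁, ρ t₀ v₂, ρ t₀ u₁})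
    (hnc₂ : ¬ Collinear ℝ {ρ t₀ v₁, ρ t₀ v₂, ρ t₀ u₂})
    (hdih : ∀ t, dihedralAngle (ρ t v₁) (ρ t v₂) (ρ t u₁) (ρ t u₂) =
      dihedralAngle (ρ t₀ v₁) (ρ t₀ v₂) (ρ t₀ u₁) (ρ t₀ u₂)) :
    ∀ t, dist (ρ t u₁) (ρ t u₂) = dist (ρ t₀ u₁) (ρ t₀ u₂) := by
  intro t
  have habel : ∀ x y z : E3, x - z - (y - z) = x - y := fun x y z => by abel
  have he0 : ρ t₀ v₂ - ρ t₀ v₁ ≠ 0 := by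
    intro h0
    apply hnc₁
    rw [show ρ t₀ v₂ = ρ t₀ v₁ from sub_eq_zero.mp h0, Set.insert_idem]
    exact collinear_pair ℝ _ _
  have key := core (ρ t v₂ - ρ t v₁) (ρ t u₁ - ρ t v₁) (ρ t u₂ - ρ t v₁)
    (ρ t₀ v₂ - ρ t₀ v₁) (ρ t₀ u₁ - ρ t₀ v₁) (ρ t₀ u₂ - ρ t₀ v₁) he0
    (by simpa [dist_eq_norm'] using h₁ t)
    (by simpa [dist_eq_norm'] using h₂ t)
    (by rw [habel, habel]; simpa [dist_eq_norm'] using h₃ t)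
    (by simpa [dist_eq_norm'] using h₄ t)
    (by rw [habel, habel]; simpa [dist_eq_norm'] using h₅ t)
    (fun k hk => (not_collinear_aux hnc₁ k hk).elim)
    (fun k hk => (not_collinear_aux hnc₂ k hk).elim)
    (by
      have := hdih t
      rw [dihedralAngle_eq, dihedralAngle_eq] at this
      exact this)
  rw [habel, habel] at key
  simpa [dist_eq_norm] using key
end

section
/- Conversely to the previous statement: let ρ : [0,1) → (ℝ³)^V be continuous, and suppose all six pairwise distances among ρ(t)(v₁), ρ(t)(v₂), ρ(t)(u₁), ρ(t)(u₂) are constant in t, and that ρ(0)(v₁), ρ(0)(v₂), ρ(0)(u₁) are non-collinear and ρ(0)(v₁), ρ(0)(v₂), ρ(0)(u₂) are non-collinear. Then the (unsigned) dihedral angle at the edge {v₁, v₂} between the triangles (v₁,v₂,u₁) and (v₁,v₂,u₂) is constant in t. -/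
open InnerProductGeometry Real
open scoped RealInnerProductSpace

local notation "E" => EuclideanSpace ℝ (Fin 3)

lemma proj_inner (w x y : E) (hw : w ≠ 0) :
    ⟪((Submodule.orthogonalProjectionOnto (ℝ ∙ w)ᗮ) x : E), ((Submodule.orthogonalProjectionOnto (ℝ ∙ w)ᗮ) y : E)⟫
      = ⟪x, y⟫ - ⟪w, x⟫ * ⟪w, y⟫ / ⟪w, w⟫ := by
  have hn : ‖w‖ ≠ 0 := norm_ne_zero_iff.mpr hw
  have hs : ⟪w, w⟫ = ‖w‖ ^ 2 := real_inner_self_eq_norm_sq w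
  rw [Submodule.coe_orthogonalProjectionOnto_apply, Submodule.coe_orthogonalProjectionOnto_apply,
      Submodule.starProjection_orthogonal_val, Submodule.starProjection_orthogonal_val,
      Submodule.starProjection_singleton, Submodule.starProjection_singleton]
  simp only [inner_sub_left, inner_sub_right, real_inner_smul_left,
    real_inner_smul_right, real_inner_comm w x, real_inner_comm w y, hs, RCLike.ofReal_real_eq_id, id]
  field_simp
  ring

lemma dihedral_eq_of_inner_eq (a b c d a' b' c' d' : E) (hw : b - a ≠ 0)
    (e1 : ⟪b - a, b - a⟫ = ⟪b' - a', b' - a'⟫)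
    (e2 : ⟪c - a, c - a⟫ = ⟪c' - a', c' - a'⟫)
    (e3 : ⟪d - a, d - a⟫ = ⟪d' - a', d' - a'⟫)
    (e4 : ⟪b - a, c - a⟫ = ⟪b' - a', c' - a'⟫)
    (e5 : ⟪b - a, d - a⟫ = ⟪b' - a', d' - a'⟫)
    (e6 : ⟪c - a, d - a⟫ = ⟪c' - a', d' - a'⟫) :
    dihedralAngle a b c d = dihedralAngle a' b' c' d' := by
  have hw' : b' - a' ≠ 0 := by
    intro h
    rw [h, inner_zero_left, inner_self_eq_zero] at e1
    exact hw e1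
  unfold dihedralAngle InnerProductGeometry.angle
  have hni : ∀ (w z : E) (hz : w ≠ 0),
      ‖((Submodule.orthogonalProjectionOnto (ℝ ∙ w)ᗮ) z)‖
        = Real.sqrt (⟪z, z⟫ - ⟪w, z⟫ * ⟪w, z⟫ / ⟪w, w⟫) := by
    intro w z hz
    rw [show ‖((Submodule.orthogonalProjectionOnto (ℝ ∙ w)ᗮ) z)‖
        = ‖(((Submodule.orthogonalProjectionOnto (ℝ ∙ w)ᗮ) z : E))‖ from rfl,
      norm_eq_sqrt_real_inner, proj_inner w z z hz]
  have hii : ∀ (w y z : E) (hz : w ≠ 0),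
      (⟪(Submodule.orthogonalProjectionOnto (ℝ ∙ w)ᗮ) y, (Submodule.orthogonalProjectionOnto (ℝ ∙ w)ᗮ) z⟫ : ℝ)
        = ⟪y, z⟫ - ⟪w, y⟫ * ⟪w, z⟫ / ⟪w, w⟫ := by
    intro w y z hz
    rw [show (⟪(Submodule.orthogonalProjectionOnto (ℝ ∙ w)ᗮ) y, (Submodule.orthogonalProjectionOnto (ℝ ∙ w)ᗮ) z⟫ : ℝ)
        = ⟪((Submodule.orthogonalProjectionOnto (ℝ ∙ w)ᗮ) y : E), ((Submodule.orthogonalProjectionOnto (ℝ ∙ w)ᗮ) z : E)⟫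
        from rfl, proj_inner w y z hz]
  rw [hni _ _ hw, hni _ _ hw, hni _ _ hw', hni _ _ hw', hii _ _ _ hw, hii _ _ _ hw',
    e1, e2, e3, e4, e5, e6]

lemma inner_eq_of_norms (x y x' y' : E) (hx : ‖x‖ = ‖x'‖) (hy : ‖y‖ = ‖y'‖)
    (hxy : ‖x - y‖ = ‖x' - y'‖) : ⟪x, y⟫ = ⟪x', y'⟫ := by
  have h1 := norm_sub_sq_real x y
  have h2 := norm_sub_sq_real x' y'
  rw [hx, hy, hxy] at h1
  linarith

/-- if all six pairwise distances among `v₁, v₂, u₁, u₂` are constant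
along a flex and the two triangles at the edge `{v₁, v₂}` are non-degenerate, then
the (unsigned) dihedral angle at `{v₁, v₂}` is constant along the flex. -/
theorem dihedral_constant_of_dists_constant {V : Type*} [Fintype V]
    (ρ : Set.Ico (0 : ℝ) 1 → V → EuclideanSpace ℝ (Fin 3))
    (hcont : Continuous ρ)
    (v₁ v₂ u₁ u₂ : V)
    (t₀ : Set.Ico (0 : ℝ) 1) (ht₀ : (t₀ : ℝ) = 0)
    (h₁ : ∀ t, dist (ρ t v₁) (ρ t v₂) = dist (ρ t₀ v₁) (ρ t₀ v₂))
    (h₂ : ∀ t, dist (ρ t v₁) (ρ t u₁) = dist (ρ t₀ v₁) (ρ t₀ u₁))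
    (h₃ : ∀ t, dist (ρ t v₂) (ρ t u₁) = dist (ρ t₀ v₂) (ρ t₀ u₁))
    (h₄ : ∀ t, dist (ρ t v₁) (ρ t u₂) = dist (ρ t₀ v₁) (ρ t₀ u₂))
    (h₅ : ∀ t, dist (ρ t v₂) (ρ t u₂) = dist (ρ t₀ v₂) (ρ t₀ u₂))
    (h₆ : ∀ t, dist (ρ t u₁) (ρ t u₂) = dist (ρ t₀ u₁) (ρ t₀ u₂))
    (hnc₁ : ¬ Collinear ℝ {ρ t₀ v₁, ρ t₀ v₂, ρ t₀ u₁})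
    (hnc₂ : ¬ Collinear ℝ {ρ t₀ v₁, ρ t₀ v₂, ρ t₀ u₂}) :
    ∀ t, dihedralAngle (ρ t v₁) (ρ t v₂) (ρ t u₁) (ρ t u₂) =
      dihedralAngle (ρ t₀ v₁) (ρ t₀ v₂) (ρ t₀ u₁) (ρ t₀ u₂) := by
  intro t
  -- the base edge is non-degenerate
  have hne0 : ρ t₀ v₁ ≠ ρ t₀ v₂ := by
    intro h
    apply hnc₁
    rw [h, Set.insert_idem]
    exact collinear_pair ℝ _ _
  have hne : ρ t v₂ ≠ ρ t v₁ := by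
    intro h
    have hd : dist (ρ t v₁) (ρ t v₂) = 0 := by rw [h, dist_self]
    rw [h₁ t] at hd
    exact hne0 (dist_eq_zero.mp hd)
  -- norm equalities
  have n1 : ‖ρ t v₂ - ρ t v₁‖ = ‖ρ t₀ v₂ - ρ t₀ v₁‖ := by
    rw [norm_sub_rev, norm_sub_rev (ρ t₀ v₂), ← dist_eq_norm, ← dist_eq_norm]; exact h₁ t
  have n2 : ‖ρ t u₁ - ρ t v₁‖ = ‖ρ t₀ u₁ - ρ t₀ v₁‖ := by
    rw [norm_sub_rev, norm_sub_rev (ρ t₀ u₁), ← dist_eq_norm, ← dist_eq_norm]; exact h₂ t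
  have n3 : ‖ρ t u₂ - ρ t v₁‖ = ‖ρ t₀ u₂ - ρ t₀ v₁‖ := by
    rw [norm_sub_rev, norm_sub_rev (ρ t₀ u₂), ← dist_eq_norm, ← dist_eq_norm]; exact h₄ t
  have n4 : ‖(ρ t v₂ - ρ t v₁) - (ρ t u₁ - ρ t v₁)‖
      = ‖(ρ t₀ v₂ - ρ t₀ v₁) - (ρ t₀ u₁ - ρ t₀ v₁)‖ := by
    rw [sub_sub_sub_cancel_right, sub_sub_sub_cancel_right, ← dist_eq_norm, ← dist_eq_norm]
    exact h₃ t
  have n5 : ‖(ρ t v₂ - ρ t v₁) - (ρ t u₂ - ρ t v₁)‖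
      = ‖(ρ t₀ v₂ - ρ t₀ v₁) - (ρ t₀ u₂ - ρ t₀ v₁)‖ := by
    rw [sub_sub_sub_cancel_right, sub_sub_sub_cancel_right, ← dist_eq_norm, ← dist_eq_norm]
    exact h₅ t
  have n6 : ‖(ρ t u₁ - ρ t v₁) - (ρ t u₂ - ρ t v₁)‖
      = ‖(ρ t₀ u₁ - ρ t₀ v₁) - (ρ t₀ u₂ - ρ t₀ v₁)‖ := by
    rw [sub_sub_sub_cancel_right, sub_sub_sub_cancel_right, ← dist_eq_norm, ← dist_eq_norm]
    exact h₆ t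
  refine dihedral_eq_of_inner_eq _ _ _ _ _ _ _ _ (sub_ne_zero.mpr hne) ?_ ?_ ?_ ?_ ?_ ?_
  · rw [real_inner_self_eq_norm_sq, real_inner_self_eq_norm_sq, n1]
  · rw [real_inner_self_eq_norm_sq, real_inner_self_eq_norm_sq, n2]
  · rw [real_inner_self_eq_norm_sq, real_inner_self_eq_norm_sq, n3]
  · exact inner_eq_of_norms _ _ _ _ n1 n2 n4
  · exact inner_eq_of_norms _ _ _ _ n1 n3 n5
  · exact inner_eq_of_norms _ _ _ _ n2 n3 n6
end

section
/- Let G be the 1-skeleton of a triangular polyhedron with a flex f, and let G' be obtained from G by a single flip on an edge {v₁,v₂} whose dihedral angle is constant along f (replacing {v₁,v₂} with {u₁,u₂}, where u₁, u₂ are the opposite vertices of the two triangles containing {v₁,v₂}), with all four triangles involved non-degenerate in the realizations of f. Then f is a flex of G' as well: every edge of G', in particular the new edge {u₁,u₂}, has constant length along f. -/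
/-- Flip of a graph on an edge `{v₁,v₂}` with replacement edge `{u₁,u₂}`. -/
def SimpleGraph.flip {V : Type*} (H : SimpleGraph V) (v₁ v₂ u₁ u₂ : V) : SimpleGraph V :=
  SimpleGraph.fromEdgeSet ((H.edgeSet \ {s(v₁, v₂)}) ∪ {s(u₁, u₂)})

open RealInnerProductSpace in
lemma dist_sq_of_dihedral (a b c d : EuclideanSpace ℝ (Fin 3)) (hab : a ≠ b) :
    dist c d ^ 2 =
      (((dist a c ^ 2 + dist a b ^ 2 - dist b c ^ 2) / 2
        - (dist a d ^ 2 + dist a b ^ 2 - dist b d ^ 2) / 2) ^ 2) / dist a b ^ 2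
      + (dist a c ^ 2 - ((dist a c ^ 2 + dist a b ^ 2 - dist b c ^ 2) / 2) ^ 2 / dist a b ^ 2)
      + (dist a d ^ 2 - ((dist a d ^ 2 + dist a b ^ 2 - dist b d ^ 2) / 2) ^ 2 / dist a b ^ 2)
      - 2 * Real.cos (dihedralAngle a b c d) *
        (Real.sqrt (dist a c ^ 2 - ((dist a c ^ 2 + dist a b ^ 2 - dist b c ^ 2) / 2) ^ 2 / dist a b ^ 2)
         * Real.sqrt (dist a d ^ 2 - ((dist a d ^ 2 + dist a b ^ 2 - dist b d ^ 2) / 2) ^ 2 / dist a b ^ 2)) := by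
  set e : EuclideanSpace ℝ (Fin 3) := b - a with he_def
  have he : e ≠ 0 := sub_ne_zero.2 (Ne.symm hab)
  have hL : ‖e‖ ≠ 0 := norm_ne_zero_iff.2 he
  set pc : EuclideanSpace ℝ (Fin 3) := (Submodule.orthogonalProjectionOnto (ℝ ∙ e)ᗮ (c - a) : EuclideanSpace ℝ (Fin 3)) with hpc_def
  set pd : EuclideanSpace ℝ (Fin 3) := (Submodule.orthogonalProjectionOnto (ℝ ∙ e)ᗮ (d - a) : EuclideanSpace ℝ (Fin 3)) with hpd_def
  have hmemc : pc ∈ (ℝ ∙ e)ᗮ := (Submodule.orthogonalProjectionOnto (ℝ ∙ e)ᗮ (c - a)).2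
  have hmemd : pd ∈ (ℝ ∙ e)ᗮ := (Submodule.orthogonalProjectionOnto (ℝ ∙ e)ᗮ (d - a)).2
  have hec : ⟪e, pc⟫ = 0 :=
    (Submodule.mem_orthogonal _ _).1 hmemc e (Submodule.mem_span_singleton_self e)
  have hed : ⟪e, pd⟫ = 0 :=
    (Submodule.mem_orthogonal _ _).1 hmemd e (Submodule.mem_span_singleton_self e)
  set qc : ℝ := ⟪e, c - a⟫ with hqc_def
  set qd : ℝ := ⟪e, d - a⟫ with hqd_def
  have hdecc : c - a = (qc / ‖e‖ ^ 2) • e + pc := by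
    have h := Submodule.starProjection_add_starProjection_orthogonal (K := ℝ ∙ e) (c - a)
    rw [Submodule.starProjection_singleton] at h
    exact h.symm
  have hdecd : d - a = (qd / ‖e‖ ^ 2) • e + pd := by
    have h := Submodule.starProjection_add_starProjection_orthogonal (K := ℝ ∙ e) (d - a)
    rw [Submodule.starProjection_singleton] at h
    exact h.symm
  -- norms of c-a, d-a
  have hnc : ‖c - a‖ ^ 2 = qc ^ 2 / ‖e‖ ^ 2 + ‖pc‖ ^ 2 := by
    rw [hdecc, norm_add_sq_real, norm_smul, real_inner_smul_left, hec]
    simp only [Real.norm_eq_abs, abs_div, mul_pow, div_pow, sq_abs]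
    field_simp
    ring
  have hnd' : ‖d - a‖ ^ 2 = qd ^ 2 / ‖e‖ ^ 2 + ‖pd‖ ^ 2 := by
    rw [hdecd, norm_add_sq_real, norm_smul, real_inner_smul_left, hed]
    simp only [Real.norm_eq_abs, abs_div, mul_pow, div_pow, sq_abs]
    field_simp
    ring
  have hcd : ‖c - d‖ ^ 2 = (qc - qd) ^ 2 / ‖e‖ ^ 2 + ‖pc - pd‖ ^ 2 := by
    have hsplit : c - d = ((qc - qd) / ‖e‖ ^ 2) • e + (pc - pd) := by
      have h0 : c - d = (c - a) - (d - a) := by abel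
      rw [h0, hdecc, hdecd, sub_div, sub_smul]
      abel
    rw [hsplit, norm_add_sq_real, real_inner_smul_left, inner_sub_right, hec, hed, norm_smul]
    simp only [Real.norm_eq_abs, abs_div, mul_pow, div_pow, sq_abs]
    field_simp
    ring
  have hangle : dihedralAngle a b c d = InnerProductGeometry.angle pc pd := by
    simp only [dihedralAngle, InnerProductGeometry.angle, ← he_def, hpc_def, hpd_def,
      Submodule.coe_inner, Submodule.coe_norm]
    rfl
  have hipcpd : ⟪pc, pd⟫ = Real.cos (dihedralAngle a b c d) * (‖pc‖ * ‖pd‖) := by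
    rcases eq_or_ne ‖pc‖ 0 with h0 | h0
    · rw [norm_eq_zero] at h0
      simp [h0]
    rcases eq_or_ne ‖pd‖ 0 with h1 | h1
    · rw [norm_eq_zero] at h1
      simp [h1]
    rw [hangle, InnerProductGeometry.cos_angle]
    field_simp
  have h2 : dist a b = ‖e‖ := by rw [he_def, dist_eq_norm, norm_sub_rev]
  have hac : dist a c = ‖c - a‖ := by rw [dist_eq_norm, norm_sub_rev]
  have had : dist a d = ‖d - a‖ := by rw [dist_eq_norm, norm_sub_rev]
  have hQc : qc = (dist a c ^ 2 + dist a b ^ 2 - dist b c ^ 2) / 2 := by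
    have h3 : dist b c = ‖(c - a) - e‖ := by
      rw [he_def, dist_eq_norm']
      congr 1
      abel
    have h4 := norm_sub_sq_real (c - a) e
    have h5 := real_inner_comm e (c - a)
    rw [hac, h2, h3, h4]
    rw [← hqc_def] at h5
    rw [← h5]
    ring
  have hQd : qd = (dist a d ^ 2 + dist a b ^ 2 - dist b d ^ 2) / 2 := by
    have h3 : dist b d = ‖(d - a) - e‖ := by
      rw [he_def, dist_eq_norm']
      congr 1
      abel
    have h4 := norm_sub_sq_real (d - a) e
    have h5 := real_inner_comm e (d - a)
    rw [had, h2, h3, h4]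
    rw [← hqd_def] at h5
    rw [← h5]
    ring
  have hPc : dist a c ^ 2 - qc ^ 2 / dist a b ^ 2 = ‖pc‖ ^ 2 := by
    rw [hac, h2, hnc]; ring
  have hPd : dist a d ^ 2 - qd ^ 2 / dist a b ^ 2 = ‖pd‖ ^ 2 := by
    rw [had, h2, hnd']; ring
  have hsc : Real.sqrt (dist a c ^ 2 - qc ^ 2 / dist a b ^ 2) = ‖pc‖ := by
    rw [hPc]; exact Real.sqrt_sq (norm_nonneg _)
  have hsd : Real.sqrt (dist a d ^ 2 - qd ^ 2 / dist a b ^ 2) = ‖pd‖ := by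
    rw [hPd]; exact Real.sqrt_sq (norm_nonneg _)
  rw [dist_eq_norm c d, ← hQc, ← hQd, hsc, hsd, hPc, hPd, hcd, h2, norm_sub_sq_real pc pd, hipcpd]
  ring

/-- if `f` is a flex of `G` and the dihedral angle at the edge `{v₁,v₂}`
(whose two adjacent triangles have opposite vertices `u₁, u₂` and are non-degenerate
along the flex) is constant, then `f` is also a flex of the flip `G'` of `G` on
`{v₁,v₂}`: every edge of `G'`, in particular the new edge `{u₁,u₂}`, has constant
length along `f`. -/
theorem flip_preserves_flex {V : Type*} [Fintype V] (G : SimpleGraph V)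
    (f : Set.Ico (0 : ℝ) 1 → V → EuclideanSpace ℝ (Fin 3))
    (hcont : Continuous f)
    (t₀ : Set.Ico (0 : ℝ) 1) (ht₀ : (t₀ : ℝ) = 0)
    (hflex : ∀ t, ∀ u v, G.Adj u v → dist (f t u) (f t v) = dist (f t₀ u) (f t₀ v))
    (v₁ v₂ u₁ u₂ : V)
    (hv : G.Adj v₁ v₂)
    (ht₁ : G.Adj v₁ u₁ ∧ G.Adj v₂ u₁)
    (ht₂ : G.Adj v₁ u₂ ∧ G.Adj v₂ u₂)
    (hu : u₁ ≠ u₂)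
    (hnd₁ : ∀ t, ¬ Collinear ℝ {f t v₁, f t v₂, f t u₁})
    (hnd₂ : ∀ t, ¬ Collinear ℝ {f t v₁, f t v₂, f t u₂})
    (hdih : ∀ t, dihedralAngle (f t v₁) (f t v₂) (f t u₁) (f t u₂) =
      dihedralAngle (f t₀ v₁) (f t₀ v₂) (f t₀ u₁) (f t₀ u₂)) :
    ∀ t, ∀ u v, (G.flip v₁ v₂ u₁ u₂).Adj u v →
      dist (f t u) (f t v) = dist (f t₀ u) (f t₀ v) := by

  intro t u v huv
  rw [SimpleGraph.flip, SimpleGraph.fromEdgeSet_adj] at huv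
  obtain ⟨hmem, hne⟩ := huv
  rcases hmem with hmem | hmem
  · exact hflex t u v (G.mem_edgeSet.1 hmem.1)
  · have hab : ∀ s, f s v₁ ≠ f s v₂ := by
      intro s h
      apply hnd₁ s
      rw [h, Set.insert_idem]
      exact collinear_pair ℝ _ _
    have key : ∀ s, dist (f s u₁) (f s u₂) = dist (f t₀ u₁) (f t₀ u₂) := by
      intro s
      have hsq : dist (f s u₁) (f s u₂) ^ 2 = dist (f t₀ u₁) (f t₀ u₂) ^ 2 := by
        rw [dist_sq_of_dihedral (f s v₁) (f s v₂) (f s u₁) (f s u₂) (hab s),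
          dist_sq_of_dihedral (f t₀ v₁) (f t₀ v₂) (f t₀ u₁) (f t₀ u₂) (hab t₀),
          hflex s v₁ v₂ hv, hflex s v₁ u₁ ht₁.1, hflex s v₂ u₁ ht₁.2,
          hflex s v₁ u₂ ht₂.1, hflex s v₂ u₂ ht₂.2, hdih s]
      nlinarith [dist_nonneg (x := f s u₁) (y := f s u₂),
        dist_nonneg (x := f t₀ u₁) (y := f t₀ u₂)]
    rw [Set.mem_singleton_iff, Sym2.eq_iff] at hmem
    rcases hmem with ⟨h1, h2⟩ | ⟨h1, h2⟩
    · subst h1; subst h2; exact key t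
    · subst h1; subst h2
      rw [dist_comm (f t u), dist_comm (f t₀ u)]
      exact key t
end
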